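/- Let M be a positive integer, r ≥ 1 a real number, and let X₁, …, X_M and Y₁, …, Y_M be real numbers with Σ_β X_β² ≥ M/2, Σ_β Y_β² ≥ M/2, and Σ_β X_β Y_β ≥ −M/4. For each β set c_β = (X_β + Y_β)/2 and d_β = (X_β − Y_β)/2. Then Σ_{β=1}^M ( c_β·(r² − 1) + d_β·(r^{−2} − 1) )² ≥ (M/8)·(r − r^{−1})²·(r² + 3r^{−2}) ≥ (M/8)·(r − r^{−1})⁴. -/
import Mathlib


/-- The key deterministic lower bound in the condensation proof:
with `c_β = (X_β + Y_β)/2`, `d_β = (X_β - Y_β)/2`, and the stated lower bounds on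
`Σ X_β²`, `Σ Y_β²` and `Σ X_β Y_β`,
`Σ_β (c_β (r² - 1) + d_β (r⁻² - 1))² ≥ (M/8)(r - r⁻¹)²(r² + 3r⁻²) ≥ (M/8)(r - r⁻¹)⁴`. -/
theorem stmt_15 (M : ℕ) (hM : 0 < M) (r : ℝ) (hr : 1 ≤ r)
    (X Y : Fin M → ℝ)
    (hX : (M : ℝ) / 2 ≤ ∑ β, X β ^ 2)
    (hY : (M : ℝ) / 2 ≤ ∑ β, Y β ^ 2)
    (hXY : -((M : ℝ) / 4) ≤ ∑ β, X β * Y β) :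
    (M : ℝ) / 8 * (r - r⁻¹) ^ 2 * (r ^ 2 + 3 * r⁻¹ ^ 2)
        ≤ ∑ β, ((X β + Y β) / 2 * (r ^ 2 - 1) + (X β - Y β) / 2 * (r⁻¹ ^ 2 - 1)) ^ 2 ∧
    (M : ℝ) / 8 * (r - r⁻¹) ^ 4
        ≤ (M : ℝ) / 8 * (r - r⁻¹) ^ 2 * (r ^ 2 + 3 * r⁻¹ ^ 2) := by
  have hr0 : (0 : ℝ) < r := lt_of_lt_of_le one_pos hr
  have hinv : r * r⁻¹ = 1 := mul_inv_cancel₀ hr0.ne'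
  have hinvle : r⁻¹ ≤ 1 := by rw [inv_le_one_iff₀]; right; exact hr
  have hinv0 : 0 < r⁻¹ := inv_pos.mpr hr0
  have h5 : (r - r⁻¹) ^ 2 = r ^ 2 + r⁻¹ ^ 2 - 2 := by linear_combination (-2 : ℝ) * hinv
  obtain ⟨A, hA⟩ : ∃ A : ℝ, A = r ^ 2 + r⁻¹ ^ 2 - 2 := ⟨_, rfl⟩
  obtain ⟨B, hB⟩ : ∃ B : ℝ, B = r ^ 2 - r⁻¹ ^ 2 := ⟨_, rfl⟩
  have hA0 : 0 ≤ A := by rw [hA, ← h5]; positivity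
  have hB0 : 0 ≤ B := by
    rw [hB]; have : r⁻¹ ≤ r := le_trans hinvle hr
    nlinarith
  have hsum : ∑ β, ((X β + Y β) / 2 * (r ^ 2 - 1) + (X β - Y β) / 2 * (r⁻¹ ^ 2 - 1)) ^ 2
      = A ^ 2 / 4 * ∑ β, X β ^ 2 + A * B / 2 * ∑ β, X β * Y β
        + B ^ 2 / 4 * ∑ β, Y β ^ 2 := by
    rw [Finset.mul_sum, Finset.mul_sum, Finset.mul_sum, ← Finset.sum_add_distrib,
      ← Finset.sum_add_distrib]
    refine Finset.sum_congr rfl fun β _ => by rw [hA, hB]; ring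
  have hM0 : (0 : ℝ) < M := Nat.cast_pos.mpr hM
  constructor
  · rw [hsum]
    have key : (M : ℝ) / 8 * (r - r⁻¹) ^ 2 * (r ^ 2 + 3 * r⁻¹ ^ 2)
        = (M : ℝ) / 8 * (A ^ 2 + B ^ 2 - A * B) := by
      rw [hA, hB, h5]; linear_combination ((M:ℝ)/2*(r*r⁻¹+1)) * hinv
    rw [key]
    have h1 : A ^ 2 / 4 * ((M : ℝ) / 2) ≤ A ^ 2 / 4 * ∑ β, X β ^ 2 :=
      mul_le_mul_of_nonneg_left hX (by positivity)
    have h2 : B ^ 2 / 4 * ((M : ℝ) / 2) ≤ B ^ 2 / 4 * ∑ β, Y β ^ 2 :=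
      mul_le_mul_of_nonneg_left hY (by positivity)
    have h3 : A * B / 2 * (-((M : ℝ) / 4)) ≤ A * B / 2 * ∑ β, X β * Y β :=
      mul_le_mul_of_nonneg_left hXY (by positivity)
    linarith
  · have h4 : (r - r⁻¹) ^ 2 ≤ r ^ 2 + 3 * r⁻¹ ^ 2 := by
      rw [h5]; nlinarith [sq_nonneg r⁻¹]
    calc (M : ℝ) / 8 * (r - r⁻¹) ^ 4
        = (M : ℝ) / 8 * (r - r⁻¹) ^ 2 * (r - r⁻¹) ^ 2 := by ring
      _ ≤ (M : ℝ) / 8 * (r - r⁻¹) ^ 2 * (r ^ 2 + 3 * r⁻¹ ^ 2) :=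
          mul_le_mul_of_nonneg_left h4 (by positivity)
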